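/- Let b : X × Y → ℝ be a norm-one continuous bilinear form with linearization T_b on X ⊗̂_π Y and 0 < ε < 1. Then S(T_b, ε²) ⊆ co̅{x ⊗ y : (x, y) ∈ S(b, ε)} + 4ε B_{X ⊗̂_π Y}, i.e., every u in the unit ball of X ⊗̂_π Y with T_b(u) ≥ 1 − ε² is within distance 4ε of the closed convex hull of elementary tensors x ⊗ y with ‖x‖, ‖y‖ ≤ 1 and b(x, y) ≥ 1 − ε. -/

import Mathlib

/-!
Write `u = ∑ cᵢ • xᵢ ⊗ yᵢ` with `cᵢ ≥ 0`, `xᵢ, yᵢ` in the unit balls and `∑ cᵢ < 1 + εη`. Since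
`b ≤ 1` on such pairs, `T_b u ≥ 1 - ε²` forces the mass `a` of the indices with `b(xᵢ, yᵢ) < 1 - ε`
to be at most `ε + η`, and the remaining mass `s` to be positive and close to `1`. The normalised
good part `w = s⁻¹ ∑_{good} cᵢ • xᵢ ⊗ yᵢ` is a convex combination of tensors from `S(b, ε)`, and
`u - w = (1 - s⁻¹) ∑_{good} + ∑_{bad}` has projective norm at most `|s - 1| + a ≤ 3ε + 2η`.
-/

open TensorProduct

variable {X Y : Type*} [NormedAddCommGroup X] [NormedSpace ℝ X]
  [NormedAddCommGroup Y] [NormedSpace ℝ Y]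

/-- The projective tensor norm of an element of `X ⊗ Y`: the infimum of
`∑ ‖xᵢ‖‖yᵢ‖` over all finite representations `t = ∑ xᵢ ⊗ yᵢ`. -/
noncomputable def projNorm (t : X ⊗[ℝ] Y) : ℝ :=
  sInf {r | ∃ (n : ℕ) (x : Fin n → X) (y : Fin n → Y),
    t = ∑ i, x i ⊗ₜ[ℝ] y i ∧ r = ∑ i, ‖x i‖ * ‖y i‖}

/-- The linearisation `T_b` on the tensor product of a continuous bilinear form
`b`. -/
noncomputable def Tb (b : X →L[ℝ] Y →L[ℝ] ℝ) : X ⊗[ℝ] Y →ₗ[ℝ] ℝ :=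
  TensorProduct.lift (LinearMap.mk₂ ℝ (fun x y => b x y)
    (by intros; simp) (by intros; simp) (by intros; simp) (by intros; simp))

theorem exists_eq_sum_tmul (t : X ⊗[ℝ] Y) :
    ∃ (n : ℕ) (x : Fin n → X) (y : Fin n → Y), t = ∑ i, x i ⊗ₜ[ℝ] y i := by
  induction t using TensorProduct.induction_on with
  | zero => exact ⟨0, ![], ![], by simp⟩
  | tmul x y => exact ⟨1, ![x], ![y], by simp⟩
  | add s t hs ht =>
    obtain ⟨n, x, y, rfl⟩ := hs
    obtain ⟨m, x', y', rfl⟩ := ht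
    exact ⟨n + m, Fin.append x x', Fin.append y y', by simp [Fin.sum_univ_add]⟩

theorem projNorm_le_of_eq_sum {t : X ⊗[ℝ] Y} {n : ℕ} {x : Fin n → X} {y : Fin n → Y}
    (h : t = ∑ i, x i ⊗ₜ[ℝ] y i) : projNorm t ≤ ∑ i, ‖x i‖ * ‖y i‖ := by
  refine csInf_le ⟨0, ?_⟩ ⟨n, x, y, h, rfl⟩
  rintro r ⟨n, x, y, -, rfl⟩
  exact Finset.sum_nonneg fun i _ => by positivity

theorem projNorm_sum_smul_tmul_le {n : ℕ} (c : Fin n → ℝ) {x : Fin n → X} {y : Fin n → Y}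
    (hx : ∀ i, ‖x i‖ ≤ 1) (hy : ∀ i, ‖y i‖ ≤ 1) :
    projNorm (∑ i, c i • x i ⊗ₜ[ℝ] y i) ≤ ∑ i, |c i| := by
  calc projNorm (∑ i, c i • x i ⊗ₜ[ℝ] y i)
      ≤ ∑ i, ‖c i • x i‖ * ‖y i‖ := projNorm_le_of_eq_sum (by simp only [smul_tmul'])
    _ ≤ ∑ i, |c i| := Finset.sum_le_sum fun i _ => by
      rw [norm_smul, Real.norm_eq_abs]
      have := mul_le_mul (hx i) (hy i) (norm_nonneg _) zero_le_one
      nlinarith [abs_nonneg (c i), norm_nonneg (x i), norm_nonneg (y i)]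

theorem tmul_eq_smul_tmul_inv_norm_smul (x : X) (y : Y) :
    x ⊗ₜ[ℝ] y = (‖x‖ * ‖y‖) • ((‖x‖⁻¹ • x) ⊗ₜ[ℝ] (‖y‖⁻¹ • y)) := by
  rcases eq_or_ne x 0 with rfl | hx
  · simp
  rcases eq_or_ne y 0 with rfl | hy
  · simp
  rw [smul_tmul_smul, smul_smul, mul_mul_mul_comm, mul_inv_cancel₀ (norm_ne_zero_iff.2 hx),
    mul_inv_cancel₀ (norm_ne_zero_iff.2 hy), one_mul, one_smul]

theorem exists_eq_sum_smul_tmul_of_projNorm_lt {t : X ⊗[ℝ] Y} {r : ℝ} (ht : projNorm t < r) :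
    ∃ (n : ℕ) (c : Fin n → ℝ) (x : Fin n → X) (y : Fin n → Y),
      (∀ i, 0 ≤ c i) ∧ (∀ i, ‖x i‖ ≤ 1) ∧ (∀ i, ‖y i‖ ≤ 1) ∧
      t = ∑ i, c i • x i ⊗ₜ[ℝ] y i ∧ ∑ i, c i < r := by
  obtain ⟨n₀, x₀, y₀, h₀⟩ := exists_eq_sum_tmul t
  obtain ⟨_, ⟨n, x, y, rfl, rfl⟩, hlt⟩ :=
    exists_lt_of_csInf_lt (s := {r | ∃ (n : ℕ) (x : Fin n → X) (y : Fin n → Y),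
      t = ∑ i, x i ⊗ₜ[ℝ] y i ∧ r = ∑ i, ‖x i‖ * ‖y i‖}) ⟨_, n₀, x₀, y₀, h₀, rfl⟩ ht
  refine ⟨n, fun i => ‖x i‖ * ‖y i‖, fun i => ‖x i‖⁻¹ • x i, fun i => ‖y i‖⁻¹ • y i,
    fun i => by positivity, fun i => ?_, fun i => ?_,
    Finset.sum_congr rfl fun i _ => tmul_eq_smul_tmul_inv_norm_smul _ _, hlt⟩
  · simpa using inv_norm_smul_mem_unitClosedBall (x i)
  · simpa using inv_norm_smul_mem_unitClosedBall (y i)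

theorem Tb_tmul (b : X →L[ℝ] Y →L[ℝ] ℝ) (x : X) (y : Y) : Tb b (x ⊗ₜ[ℝ] y) = b x y := by
  simp [Tb]

theorem apply_apply_le_one_of_norm_le_one {b : X →L[ℝ] Y →L[ℝ] ℝ} (hb : ‖b‖ ≤ 1) {x : X} {y : Y}
    (hx : ‖x‖ ≤ 1) (hy : ‖y‖ ≤ 1) : b x y ≤ 1 :=
  calc b x y ≤ ‖b‖ * ‖x‖ * ‖y‖ := (Real.le_norm_self _).trans (b.le_opNorm₂ x y)
    _ ≤ 1 * 1 * 1 := by gcongr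
    _ = 1 := by norm_num

theorem sum_mul_le_sum_filter_add_mul_sum_filter_not {ι : Type*} (s : Finset ι) {c β : ι → ℝ}
    (θ : ℝ) (hc : ∀ i ∈ s, 0 ≤ c i) (hβ : ∀ i ∈ s, β i ≤ 1) :
    ∑ i ∈ s, c i * β i ≤ ∑ i ∈ s with θ ≤ β i, c i + θ * ∑ i ∈ s with ¬ θ ≤ β i, c i := by
  rw [← Finset.sum_filter_add_sum_filter_not s (fun i => θ ≤ β i), Finset.mul_sum]
  refine add_le_add (Finset.sum_le_sum fun i hi => ?_) (Finset.sum_le_sum fun i hi => ?_)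
  · obtain ⟨hi, -⟩ := Finset.mem_filter.1 hi
    exact mul_le_of_le_one_right (hc i hi) (hβ i hi)
  · obtain ⟨hi, hθ⟩ := Finset.mem_filter.1 hi
    nlinarith [hc i hi]

theorem sum_smul_sub_smul_sum_filter {ι M : Type*} [AddCommGroup M] [Module ℝ M] (s : Finset ι)
    (p : ι → Prop) [DecidablePred p] (c : ι → ℝ) (z : ι → M) (r : ℝ) :
    ∑ i ∈ s, c i • z i - r • ∑ i ∈ s with p i, c i • z i =
      ∑ i ∈ s, (if p i then (1 - r) * c i else c i) • z i := by
  rw [← Finset.sum_filter_add_sum_filter_not s p (fun i => c i • z i)]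
  simp only [ite_smul, Finset.sum_ite, mul_smul, sub_smul, one_smul, Finset.sum_sub_distrib,
    Finset.smul_sum]
  abel

theorem sum_abs_ite_mul {ι : Type*} (s : Finset ι) (p : ι → Prop) [DecidablePred p]
    {c : ι → ℝ} (hc : ∀ i ∈ s, 0 ≤ c i) (r : ℝ) :
    ∑ i ∈ s, |if p i then r * c i else c i| =
      |r| * ∑ i ∈ s with p i, c i + ∑ i ∈ s with ¬ p i, c i := by
  simp only [apply_ite abs, Finset.sum_ite, abs_mul, Finset.mul_sum]
  congr 1 <;> refine Finset.sum_congr rfl fun i hi => ?_ <;>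
    rw [abs_of_nonneg (hc i (Finset.mem_filter.1 hi).1)]

theorem pos_and_abs_sub_one_add_le {ε η s a : ℝ} (hε : 0 < ε) (hε1 : ε < 1) (hη : η < 1)
    (ha : 0 ≤ a) (hslice : 1 - ε ^ 2 ≤ s + (1 - ε) * a) (hmass : s + a < 1 + ε * η) :
    0 < s ∧ |s - 1| + a ≤ 3 * ε + 2 * η := by
  have hεa : ε * a < ε * (ε + η) := by nlinarith
  have haε : a < ε + η := lt_of_mul_lt_mul_left hεa hε.le
  refine ⟨by nlinarith, ?_⟩
  rcases le_total s 1 with h | h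
  · rw [abs_of_nonpos (by linarith)]
    nlinarith
  · rw [abs_of_nonneg (by linarith)]
    nlinarith

theorem slice_subset_closedConvexHull_add_ball_general
    (b : X →L[ℝ] Y →L[ℝ] ℝ) (hb : ‖b‖ = 1) (ε : ℝ) (hε : 0 < ε) (hε1 : ε < 1)
    (u : X ⊗[ℝ] Y) (hu : projNorm u ≤ 1) (hTu : 1 - ε ^ 2 ≤ Tb b u) :
    ∀ δ > (0 : ℝ),
      ∃ w ∈ convexHull ℝ {v : X ⊗[ℝ] Y | ∃ (x : X) (y : Y),
        ‖x‖ ≤ 1 ∧ ‖y‖ ≤ 1 ∧ 1 - ε ≤ b x y ∧ v = x ⊗ₜ[ℝ] y},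
      projNorm (u - w) < 4 * ε + δ := by
  intro δ hδ
  set η := min (δ / 2) (1 / 2)
  have hη : 0 < η := by positivity
  have hη1 : η < 1 := (min_le_right _ _).trans_lt (by norm_num)
  obtain ⟨n, c, x, y, hc, hx, hy, rfl, hmass⟩ :=
    exists_eq_sum_smul_tmul_of_projNorm_lt (r := 1 + ε * η) (by nlinarith)
  classical
  set A := Finset.univ.filter fun i => 1 - ε ≤ b (x i) (y i)
  set s := ∑ i ∈ A, c i
  set a := ∑ i with ¬ 1 - ε ≤ b (x i) (y i), c i
  have hslice : 1 - ε ^ 2 ≤ s + (1 - ε) * a := by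
    refine hTu.trans (le_of_eq_of_le ?_ (sum_mul_le_sum_filter_add_mul_sum_filter_not _ _
      (fun i _ => hc i) fun i _ => apply_apply_le_one_of_norm_le_one hb.le (hx i) (hy i)))
    simp [Tb_tmul]
  obtain ⟨hs, hdist⟩ := pos_and_abs_sub_one_add_le hε hε1 hη1
    (Finset.sum_nonneg fun i _ => hc i) hslice
    (by rwa [Finset.sum_filter_add_sum_filter_not])
  refine ⟨A.centerMass c fun i => x i ⊗ₜ y i, A.centerMass_mem_convexHull (fun i _ => hc i) hs
    fun i hi => ⟨x i, y i, hx i, hy i, (Finset.mem_filter.1 hi).2, rfl⟩, ?_⟩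
  rw [Finset.centerMass, sum_smul_sub_smul_sum_filter]
  calc projNorm _ ≤ _ := projNorm_sum_smul_tmul_le _ hx hy
    _ = |1 - s⁻¹| * s + a := sum_abs_ite_mul _ _ (fun i _ => hc i) _
    _ = |s - 1| + a := by
      rw [show s - 1 = (1 - s⁻¹) * s by field_simp, abs_mul, abs_of_pos hs]
    _ ≤ 3 * ε + 2 * η := hdist
    _ < 4 * ε + δ := by linarith [min_le_left (δ / 2) (1 / 2)]

/-- for a norm-one bilinear form `b` and `0 < ε < 1`, every `u` in
the unit ball of the projective tensor product with `T_b(u) ≥ 1 - ε²` lies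
within distance `4ε` of the closed convex hull of the elementary tensors
`x ⊗ y` with `(x,y) ∈ S(b,ε)`; that is,
`S(T_b, ε²) ⊆ co̅{x ⊗ y : (x,y) ∈ S(b,ε)} + 4ε B`. -/
theorem slice_subset_closedConvexHull_add_ball
    [CompleteSpace X] [CompleteSpace Y]
    (b : X →L[ℝ] Y →L[ℝ] ℝ) (hb : ‖b‖ = 1) (ε : ℝ) (hε : 0 < ε) (hε1 : ε < 1)
    (u : X ⊗[ℝ] Y) (hu : projNorm u ≤ 1) (hTu : 1 - ε ^ 2 ≤ Tb b u) :
    ∀ δ > (0 : ℝ),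
      ∃ w ∈ convexHull ℝ {v : X ⊗[ℝ] Y | ∃ (x : X) (y : Y),
        ‖x‖ ≤ 1 ∧ ‖y‖ ≤ 1 ∧ 1 - ε ≤ b x y ∧ v = x ⊗ₜ[ℝ] y},
      projNorm (u - w) < 4 * ε + δ :=
  slice_subset_closedConvexHull_add_ball_general b hb ε hε hε1 u hu hTu
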